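/- arXiv:1307.1770 — 4 statements merged into one kernel-verified Lean document; each statement's English description precedes it below -/
import Mathlib

section
/- Let Φ ∈ ℝ^{M×N} and let I, J ⊆ {1,…,N} be disjoint nonempty index sets with |I|+|J| ≤ N. Then for every vector z ∈ ℝ^{|J|}, one has ‖Φ_I^T Φ_J z‖₂ ≤ δ_{|I|+|J|} ‖z‖₂, where δ_{|I|+|J|} is the restricted isometry constant of Φ of order |I|+|J|. -/
open scoped BigOperators
open Matrix

/-- Euclidean norm of a finite-dimensional real vector. -/
noncomputable def enorm {ι : Type*} [Fintype ι] (v : ι → ℝ) : ℝ :=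
  Real.sqrt (∑ i, v i ^ 2)

/-- `x` has at most `L` nonzero entries. -/
def SparseLe {N : ℕ} (L : ℕ) (x : Fin N → ℝ) : Prop :=
  (Finset.univ.filter fun i => x i ≠ 0).card ≤ L

/-- The restricted isometry constant of order `L`: the smallest `δ ≥ 0` such that
`(1-δ)‖x‖² ≤ ‖Φx‖² ≤ (1+δ)‖x‖²` for all `x` with at most `L` nonzero entries. -/
noncomputable def RIC {M N : ℕ} (Φ : Matrix (Fin M) (Fin N) ℝ) (L : ℕ) : ℝ :=
  sInf {δ : ℝ | 0 ≤ δ ∧ ∀ x : Fin N → ℝ, SparseLe L x →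
    (1 - δ) * ∑ i, x i ^ 2 ≤ ∑ i, (Φ.mulVec x) i ^ 2 ∧
      ∑ i, (Φ.mulVec x) i ^ 2 ≤ (1 + δ) * ∑ i, x i ^ 2}

/-- The column submatrix of `Φ` with columns indexed by the finite set `I`. -/
def colSub {M N : ℕ} (Φ : Matrix (Fin M) (Fin N) ℝ) (I : Finset (Fin N)) :
    Matrix (Fin M) {j // j ∈ I} ℝ :=
  Matrix.of fun i j => Φ i j.val

/-!
Since the set of admissible constants is closed, `δ = RIC Φ (|I| + |J|)` is itself admissible.
For `x`, `y` supported on the disjoint sets `I`, `J`, polarization gives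
`4 ⟪Φx, Φy⟫ = ‖Φ(x + y)‖² - ‖Φ(x - y)‖² ≤ 2δ (‖x‖² + ‖y‖²)`, and rescaling `x`, `y` to equal
norms improves this to `⟪Φx, Φy⟫ ≤ δ ‖x‖ ‖y‖`. For `y = Φ_Iᵀ Φ_J z` the pair (`y`, `z`), extended
by zero, has `⟪Φ_I y, Φ_J z⟫ = ‖y‖²`, so `‖y‖² ≤ δ ‖y‖ ‖z‖`.
-/

def HasRIP {M N : ℕ} (Φ : Matrix (Fin M) (Fin N) ℝ) (L : ℕ) (δ : ℝ) : Prop :=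
  ∀ x : Fin N → ℝ, SparseLe L x →
    (1 - δ) * ∑ i, x i ^ 2 ≤ ∑ i, (Φ.mulVec x) i ^ 2 ∧
      ∑ i, (Φ.mulVec x) i ^ 2 ≤ (1 + δ) * ∑ i, x i ^ 2

lemma sum_sq_eq_dotProduct_self {ι : Type*} [Fintype ι] (v : ι → ℝ) :
    ∑ i, v i ^ 2 = v ⬝ᵥ v := by
  simp only [dotProduct, sq]

lemma dotProduct_self_nonneg {ι : Type*} [Fintype ι] (v : ι → ℝ) : 0 ≤ v ⬝ᵥ v :=
  Finset.sum_nonneg fun i _ => mul_self_nonneg (v i)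

lemma dotProduct_self_pos {ι : Type*} [Fintype ι] {v : ι → ℝ} (hv : v ≠ 0) : 0 < v ⬝ᵥ v :=
  (dotProduct_self_nonneg v).lt_of_ne' (dotProduct_self_eq_zero.not.mpr hv)

lemma enorm_eq_sqrt_dotProduct_self {ι : Type*} [Fintype ι] (v : ι → ℝ) :
    _root_.enorm v = √(v ⬝ᵥ v) := by
  rw [_root_.enorm, sum_sq_eq_dotProduct_self]

lemma sparseLe_of_forall_notMem {N L : ℕ} {x : Fin N → ℝ} {S : Finset (Fin N)}
    (hx : ∀ i ∉ S, x i = 0) (hS : S.card ≤ L) : SparseLe L x := by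
  refine le_trans (Finset.card_le_card fun i hi => ?_) hS
  by_contra hiS
  exact (Finset.mem_filter.mp hi).2 (hx i hiS)

lemma sum_mulVec_sq_le {m n : Type*} [Fintype m] [Fintype n] (A : Matrix m n ℝ) (x : n → ℝ) :
    ∑ i, (A *ᵥ x) i ^ 2 ≤ (∑ i, ∑ j, A i j ^ 2) * ∑ j, x j ^ 2 := by
  rw [Finset.sum_mul]
  exact Finset.sum_le_sum fun i _ => Finset.sum_mul_sq_le_sq_mul_sq _ (A i) x

section RIC

variable {M N : ℕ} (Φ : Matrix (Fin M) (Fin N) ℝ) (L : ℕ)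

lemma exists_hasRIP : ∃ δ, 0 ≤ δ ∧ HasRIP Φ L δ := by
  set C := ∑ i, ∑ j, Φ i j ^ 2
  have hC : 0 ≤ C := by positivity
  refine ⟨1 + C, by positivity, fun x _ => ⟨?_, ?_⟩⟩
  · have : 0 ≤ ∑ i, (Φ *ᵥ x) i ^ 2 := by positivity
    have : 0 ≤ C * ∑ i, x i ^ 2 := by positivity
    linarith
  · have : 0 ≤ ∑ i, x i ^ 2 := by positivity
    nlinarith [sum_mulVec_sq_le Φ x]

lemma isClosed_setOf_hasRIP : IsClosed {δ | HasRIP Φ L δ} := by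
  simp only [HasRIP, Set.ofPred_forall]
  exact isClosed_iInter fun x => isClosed_iInter fun _ =>
    (isClosed_le (by fun_prop) continuous_const).and (isClosed_le continuous_const (by fun_prop))

lemma RIC_nonneg : 0 ≤ RIC Φ L :=
  Real.sInf_nonneg fun _ hδ => hδ.1

-- `RIC Φ L` unfolds to `sInf (Set.Ici 0 ∩ {δ | HasRIP Φ L δ})`.
lemma hasRIP_RIC : HasRIP Φ L (RIC Φ L) :=
  ((isClosed_Ici.inter (isClosed_setOf_hasRIP Φ L)).csInf_mem (exists_hasRIP Φ L)
    ⟨0, fun _ hδ => hδ.1⟩).2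

end RIC

section ExtendByZero

variable {ι : Type*} [Fintype ι] [DecidableEq ι] {S : Finset ι}

def extendByZero (S : Finset ι) (x : {j // j ∈ S} → ℝ) : ι → ℝ :=
  fun i => if h : i ∈ S then x ⟨i, h⟩ else 0

omit [Fintype ι] in
lemma extendByZero_of_notMem (x : {j // j ∈ S} → ℝ) {i : ι} (hi : i ∉ S) :
    extendByZero S x i = 0 :=
  dif_neg hi

lemma sum_extendByZero (x : {j // j ∈ S} → ℝ) (f : ι → ℝ → ℝ) (hf : ∀ i, f i 0 = 0) :
    ∑ i, f i (extendByZero S x i) = ∑ j, f j.1 (x j) := by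
  rw [← Finset.sum_subset S.subset_univ fun i _ hi => by rw [extendByZero_of_notMem x hi, hf]]
  simp only [extendByZero, apply_dite (f _)]
  exact Finset.sum_dite_of_true (fun _ h => h) _ _

lemma extendByZero_dotProduct_self (x : {j // j ∈ S} → ℝ) :
    extendByZero S x ⬝ᵥ extendByZero S x = x ⬝ᵥ x :=
  sum_extendByZero x (fun _ t => t * t) fun _ => mul_zero 0

end ExtendByZero

lemma mulVec_extendByZero {M N : ℕ} (Φ : Matrix (Fin M) (Fin N) ℝ) (S : Finset (Fin N))
    (x : {j // j ∈ S} → ℝ) : Φ *ᵥ extendByZero S x = colSub Φ S *ᵥ x := by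
  funext i
  exact sum_extendByZero x (fun j t => Φ i j * t) fun _ => mul_zero _

section RestrictedOrthogonality

variable {M N L : ℕ} {Φ : Matrix (Fin M) (Fin N) ℝ} {δ : ℝ}

lemma dotProduct_mulVec_le_of_hasRIP (hδ : HasRIP Φ L δ) {x y : Fin N → ℝ}
    (hxy : x ⬝ᵥ y = 0) (hadd : SparseLe L (x + y)) (hsub : SparseLe L (x - y)) :
    (Φ *ᵥ x) ⬝ᵥ (Φ *ᵥ y) ≤ δ / 2 * (x ⬝ᵥ x + y ⬝ᵥ y) := by
  have hle := (hδ _ hadd).2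
  have hge := (hδ _ hsub).1
  simp only [sum_sq_eq_dotProduct_self, mulVec_add, mulVec_sub, add_dotProduct, dotProduct_add,
    sub_dotProduct, dotProduct_sub, dotProduct_comm y x, hxy, dotProduct_comm (Φ *ᵥ y)] at hle hge
  linarith

lemma dotProduct_mulVec_le_of_disjoint {I J : Finset (Fin N)} (hδ : HasRIP Φ (I.card + J.card) δ)
    (hIJ : Disjoint I J) {x y : Fin N → ℝ} (hx : ∀ i ∉ I, x i = 0) (hy : ∀ i ∉ J, y i = 0) :
    (Φ *ᵥ x) ⬝ᵥ (Φ *ᵥ y) ≤ δ * √(x ⬝ᵥ x) * √(y ⬝ᵥ y) := by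
  rcases eq_or_ne x 0 with rfl | hx0
  · simp
  rcases eq_or_ne y 0 with rfl | hy0
  · simp
  have hsparse (a b : ℝ) : SparseLe (I.card + J.card) (a • x + b • y) :=
    sparseLe_of_forall_notMem (S := I ∪ J) (fun i hi => by
      rw [Finset.mem_union, not_or] at hi
      simp [hx i hi.1, hy i hi.2]) (Finset.card_union_le I J)
  have hxy : x ⬝ᵥ y = 0 := Finset.sum_eq_zero fun i _ => by
    by_cases hi : i ∈ I
    · rw [hy i (Finset.disjoint_left.mp hIJ hi), mul_zero]
    · rw [hx i hi, zero_mul]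
  set p := √(x ⬝ᵥ x)
  set q := √(y ⬝ᵥ y)
  have hpq : 0 < p * q :=
    mul_pos (Real.sqrt_pos.mpr (dotProduct_self_pos hx0))
      (Real.sqrt_pos.mpr (dotProduct_self_pos hy0))
  have hp2 : x ⬝ᵥ x = p ^ 2 := (Real.sq_sqrt (dotProduct_self_nonneg x)).symm
  have hq2 : y ⬝ᵥ y = q ^ 2 := (Real.sq_sqrt (dotProduct_self_nonneg y)).symm
  -- polarize the rescaled pair `q • x`, `p • y`, which have equal norms `p * q`
  have hpol := dotProduct_mulVec_le_of_hasRIP hδ (x := q • x) (y := p • y)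
    (by simp [hxy]) (hsparse q p) (by simpa [sub_eq_add_neg] using hsparse q (-p))
  simp only [mulVec_smul, smul_dotProduct, dotProduct_smul, smul_eq_mul, hp2, hq2] at hpol
  refine le_of_mul_le_mul_left ?_ hpq
  linarith

end RestrictedOrthogonality

theorem stmt_2_general {M N : ℕ} (Φ : Matrix (Fin M) (Fin N) ℝ) (I J : Finset (Fin N))
    (hIJ : Disjoint I J) (z : {j // j ∈ J} → ℝ) :
    _root_.enorm ((colSub Φ I)ᵀ.mulVec ((colSub Φ J).mulVec z))
      ≤ RIC Φ (I.card + J.card) * _root_.enorm z := by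
  set y := (colSub Φ I)ᵀ *ᵥ (colSub Φ J *ᵥ z)
  have hy : (Φ *ᵥ extendByZero I y) ⬝ᵥ (Φ *ᵥ extendByZero J z) = y ⬝ᵥ y := by
    rw [mulVec_extendByZero, mulVec_extendByZero, dotProduct_comm, dotProduct_mulVec,
      ← mulVec_transpose]
  have hle := dotProduct_mulVec_le_of_disjoint (hasRIP_RIC Φ _) hIJ
    (fun _ => extendByZero_of_notMem y) (fun _ => extendByZero_of_notMem z)
  rw [hy, extendByZero_dotProduct_self, extendByZero_dotProduct_self] at hle
  rw [enorm_eq_sqrt_dotProduct_self, enorm_eq_sqrt_dotProduct_self]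
  nlinarith [Real.sq_sqrt (dotProduct_self_nonneg y),
    mul_nonneg (RIC_nonneg Φ (I.card + J.card)) (Real.sqrt_nonneg (z ⬝ᵥ z))]

theorem stmt_2 {M N : ℕ} (Φ : Matrix (Fin M) (Fin N) ℝ) (I J : Finset (Fin N))
    (hI : I.Nonempty) (hJ : J.Nonempty) (hIJ : Disjoint I J)
    (hcard : I.card + J.card ≤ N) (z : {j // j ∈ J} → ℝ) :
    _root_.enorm ((colSub Φ I)ᵀ.mulVec ((colSub Φ J).mulVec z))
      ≤ RIC Φ (I.card + J.card) * _root_.enorm z :=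
  stmt_2_general Φ I J hIJ z
end

section
/- Let K and B be positive integers, let Φ ∈ ℝ^{M×N} with 3⌈K/2⌉ ≤ N and K+B ≤ N, and assume δ_{3⌈K/2⌉} > 0, where ⌈z⌉ denotes the smallest integer greater than or equal to z. Then the restricted isometry constants of Φ satisfy δ_{K+B} > δ_{3⌈K/2⌉}/3. -/
open scoped BigOperators
open Matrix

/-!
Split the support of a `3m`-sparse vector `x` into three parts of size at most `m`, so that
`x = u + v + w` with disjointly supported pieces. The defect `D y = ‖Φy‖² - ‖y‖²` is a quadratic
form, and the pointwise identity `4(a+b+c)² = Σ (3(a+b)² - (a-b)²)` over the three pairs gives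
`4 D x = Σ (3 D(u+v) - D(u-v))`. Every `u ± v` is `2m`-sparse with `‖u ± v‖² = ‖u‖² + ‖v‖²`, so
`|D x| ≤ 2 δ_{2m} ‖x‖²`, i.e. `δ_{3m} ≤ 2 δ_{2m}`. Since `2⌈K/2⌉ ≤ K + B`, monotonicity of the
RIC gives `δ_{K+B} ≥ δ_{3⌈K/2⌉} / 2 > δ_{3⌈K/2⌉} / 3`.
-/

open Finset

section SumSq

variable {ι : Type*} [Fintype ι]

def sumSq (v : ι → ℝ) : ℝ := ∑ i, v i ^ 2

lemma sumSq_nonneg (v : ι → ℝ) : 0 ≤ sumSq v :=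
  sum_nonneg fun i _ => sq_nonneg (v i)

lemma four_mul_sumSq_add_add (a b c : ι → ℝ) :
    4 * sumSq (a + b + c) =
      (3 * sumSq (a + b) - sumSq (a - b)) + (3 * sumSq (a + c) - sumSq (a - c)) +
        (3 * sumSq (b + c) - sumSq (b - c)) := by
  simp only [sumSq, Pi.add_apply, Pi.sub_apply, mul_sum, ← sum_sub_distrib, ← sum_add_distrib]
  exact sum_congr rfl fun i _ => by ring

lemma sumSq_add_of_mul_eq_zero {u v : ι → ℝ} (h : ∀ i, u i * v i = 0) :
    sumSq (u + v) = sumSq u + sumSq v := by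
  simp only [sumSq, Pi.add_apply, ← sum_add_distrib]
  exact sum_congr rfl fun i _ => by linear_combination 2 * h i

lemma sumSq_sub_of_mul_eq_zero {u v : ι → ℝ} (h : ∀ i, u i * v i = 0) :
    sumSq (u - v) = sumSq u + sumSq v := by
  simp only [sumSq, Pi.sub_apply, ← sum_add_distrib]
  exact sum_congr rfl fun i _ => by linear_combination -2 * h i

end SumSq

section Sparse

variable {N : ℕ}

lemma sparseLe_of_forall_mem {L : ℕ} {x : Fin N → ℝ} {S : Finset (Fin N)} (hS : #S ≤ L)
    (hx : ∀ i, x i ≠ 0 → i ∈ S) : SparseLe L x :=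
  (card_le_card fun i hi => hx i (mem_filter.mp hi).2).trans hS

lemma SparseLe.mono {k l : ℕ} {x : Fin N → ℝ} (hx : SparseLe k x) (hkl : k ≤ l) :
    SparseLe l x :=
  hx.trans hkl

lemma SparseLe.add {k l : ℕ} {u v : Fin N → ℝ} (hu : SparseLe k u) (hv : SparseLe l v) :
    SparseLe (k + l) (u + v) := by
  refine sparseLe_of_forall_mem ((card_union_le _ _).trans (add_le_add hu hv)) fun i hi => ?_
  by_cases hui : u i = 0
  · exact mem_union_right _ (mem_filter.mpr ⟨mem_univ i, by simpa [hui] using hi⟩)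
  · exact mem_union_left _ (mem_filter.mpr ⟨mem_univ i, hui⟩)

lemma SparseLe.neg {k : ℕ} {v : Fin N → ℝ} (hv : SparseLe k v) : SparseLe k (-v) := by
  simpa [SparseLe] using hv

lemma SparseLe.sub {k l : ℕ} {u v : Fin N → ℝ} (hu : SparseLe k u) (hv : SparseLe l v) :
    SparseLe (k + l) (u - v) :=
  sub_eq_add_neg u v ▸ hu.add hv.neg

lemma exists_eq_add_add_of_sparseLe_three_mul {m : ℕ} {x : Fin N → ℝ}
    (hx : SparseLe (3 * m) x) :
    ∃ u v w : Fin N → ℝ, x = u + v + w ∧ SparseLe m u ∧ SparseLe m v ∧ SparseLe m w ∧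
      (∀ i, u i * v i = 0) ∧ (∀ i, u i * w i = 0) ∧ (∀ i, v i * w i = 0) := by
  set T := univ.filter fun i => x i ≠ 0
  obtain ⟨A, hAT, hA⟩ := exists_subset_card_eq (min_le_right m #T)
  obtain ⟨B, hBT, hB⟩ := exists_subset_card_eq (min_le_right m #(T \ A))
  have hC : #((T \ A) \ B) ≤ m := by
    have : #T ≤ 3 * m := hx
    have hTA := card_sdiff_add_card_eq_card hAT
    have hTAB := card_sdiff_add_card_eq_card hBT
    omega
  have hAB : ∀ i ∈ B, i ∉ A := fun i hi => (mem_sdiff.mp (hBT hi)).2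
  refine ⟨fun i => if i ∈ A then x i else 0, fun i => if i ∈ B then x i else 0,
    fun i => if i ∈ (T \ A) \ B then x i else 0, funext fun i => ?_,
    sparseLe_of_forall_mem (hA ▸ min_le_left _ _) fun i hi => ?_,
    sparseLe_of_forall_mem (hB ▸ min_le_left _ _) fun i hi => ?_,
    sparseLe_of_forall_mem hC fun i hi => ?_, fun i => ?_, fun i => ?_, fun i => ?_⟩
  all_goals by_cases hiA : i ∈ A <;> by_cases hiB : i ∈ B <;> simp_all [T]

end Sparse

section RIP

variable {M N : ℕ} (Φ : Matrix (Fin M) (Fin N) ℝ)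

-- `RIC Φ L` is definitionally `sInf {δ | 0 ≤ δ ∧ IsRIPConst Φ L δ}`.
def IsRIPConst (L : ℕ) (δ : ℝ) : Prop :=
  ∀ x : Fin N → ℝ, SparseLe L x →
    (1 - δ) * sumSq x ≤ sumSq (Φ *ᵥ x) ∧ sumSq (Φ *ᵥ x) ≤ (1 + δ) * sumSq x

def ripDefect (x : Fin N → ℝ) : ℝ := sumSq (Φ *ᵥ x) - sumSq x

variable {Φ}

lemma isRIPConst_iff_abs_ripDefect_le {L : ℕ} {δ : ℝ} :
    IsRIPConst Φ L δ ↔ ∀ x, SparseLe L x → |ripDefect Φ x| ≤ δ * sumSq x := by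
  refine forall₂_congr fun x _ => ?_
  rw [ripDefect, abs_sub_le_iff]
  constructor <;> rintro ⟨h₁, h₂⟩ <;> constructor <;> linarith

lemma IsRIPConst.mono {L L' : ℕ} {δ : ℝ} (h : IsRIPConst Φ L δ) (hL : L' ≤ L) :
    IsRIPConst Φ L' δ :=
  fun x hx => h x (hx.mono hL)

variable (Φ) in
lemma four_mul_ripDefect_add_add (u v w : Fin N → ℝ) :
    4 * ripDefect Φ (u + v + w) =
      (3 * ripDefect Φ (u + v) - ripDefect Φ (u - v)) +
        (3 * ripDefect Φ (u + w) - ripDefect Φ (u - w)) +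
          (3 * ripDefect Φ (v + w) - ripDefect Φ (v - w)) := by
  simp only [ripDefect, Matrix.mulVec_add, Matrix.mulVec_sub]
  linear_combination four_mul_sumSq_add_add (Φ *ᵥ u) (Φ *ᵥ v) (Φ *ᵥ w) -
    four_mul_sumSq_add_add u v w

lemma IsRIPConst.abs_ripDefect_add_le {m : ℕ} {δ : ℝ} (h : IsRIPConst Φ (2 * m) δ)
    {u v : Fin N → ℝ} (hu : SparseLe m u) (hv : SparseLe m v) (huv : ∀ i, u i * v i = 0) :
    |ripDefect Φ (u + v)| ≤ δ * (sumSq u + sumSq v) :=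
  sumSq_add_of_mul_eq_zero huv ▸
    isRIPConst_iff_abs_ripDefect_le.mp h _ (two_mul m ▸ hu.add hv)

lemma IsRIPConst.abs_ripDefect_sub_le {m : ℕ} {δ : ℝ} (h : IsRIPConst Φ (2 * m) δ)
    {u v : Fin N → ℝ} (hu : SparseLe m u) (hv : SparseLe m v) (huv : ∀ i, u i * v i = 0) :
    |ripDefect Φ (u - v)| ≤ δ * (sumSq u + sumSq v) :=
  sumSq_sub_of_mul_eq_zero huv ▸
    isRIPConst_iff_abs_ripDefect_le.mp h _ (two_mul m ▸ hu.sub hv)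

lemma IsRIPConst.three_mul {m : ℕ} {δ : ℝ} (h : IsRIPConst Φ (2 * m) δ) :
    IsRIPConst Φ (3 * m) (2 * δ) := by
  refine isRIPConst_iff_abs_ripDefect_le.mpr fun x hx => ?_
  obtain ⟨u, v, w, rfl, hu, hv, hw, huv, huw, hvw⟩ := exists_eq_add_add_of_sparseLe_three_mul hx
  have hsum : sumSq (u + v + w) = sumSq u + sumSq v + sumSq w := by
    rw [sumSq_add_of_mul_eq_zero fun i => ?_, sumSq_add_of_mul_eq_zero huv]
    simp only [Pi.add_apply]
    linear_combination huw i + hvw i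
  have uv_add := abs_le.mp (h.abs_ripDefect_add_le hu hv huv)
  have uv_sub := abs_le.mp (h.abs_ripDefect_sub_le hu hv huv)
  have uw_add := abs_le.mp (h.abs_ripDefect_add_le hu hw huw)
  have uw_sub := abs_le.mp (h.abs_ripDefect_sub_le hu hw huw)
  have vw_add := abs_le.mp (h.abs_ripDefect_add_le hv hw hvw)
  have vw_sub := abs_le.mp (h.abs_ripDefect_sub_le hv hw hvw)
  have h4 := four_mul_ripDefect_add_add Φ u v w
  rw [hsum, abs_le]
  constructor <;> linarith

variable (Φ) in
lemma sumSq_mulVec_le (x : Fin N → ℝ) :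
    sumSq (Φ *ᵥ x) ≤ (∑ i, ∑ j, Φ i j ^ 2) * sumSq x := by
  rw [sumSq, sum_mul]
  exact sum_le_sum fun i _ => sum_mul_sq_le_sq_mul_sq univ (Φ i) x

variable (Φ) in
lemma isRIPConst_one_add_sum_sq (L : ℕ) : IsRIPConst Φ L (1 + ∑ i, ∑ j, Φ i j ^ 2) := by
  intro x _
  have hΦ : 0 ≤ ∑ i, ∑ j, Φ i j ^ 2 := by positivity
  have hx := sumSq_nonneg x
  have hΦx := sumSq_mulVec_le Φ x
  constructor <;> nlinarith [sumSq_nonneg (Φ *ᵥ x)]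

lemma RIC_le {L : ℕ} {δ : ℝ} (hδ : 0 ≤ δ) (h : IsRIPConst Φ L δ) : RIC Φ L ≤ δ :=
  csInf_le ⟨0, fun _ hδ' => hδ'.1⟩ ⟨hδ, h⟩

lemma le_RIC {L : ℕ} {c : ℝ} (h : ∀ δ, 0 ≤ δ → IsRIPConst Φ L δ → c ≤ δ) : c ≤ RIC Φ L :=
  le_csInf ⟨_, by positivity, isRIPConst_one_add_sum_sq Φ L⟩ fun δ hδ => h δ hδ.1 hδ.2

lemma RIC_mono {L L' : ℕ} (hL : L ≤ L') : RIC Φ L ≤ RIC Φ L' :=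
  le_RIC fun _ hδ h => RIC_le hδ (h.mono hL)

variable (Φ) in
lemma RIC_three_mul_le (m : ℕ) : RIC Φ (3 * m) ≤ 2 * RIC Φ (2 * m) := by
  have : RIC Φ (3 * m) / 2 ≤ RIC Φ (2 * m) :=
    le_RIC fun δ hδ h => by linarith [RIC_le (by linarith) h.three_mul]
  linarith

end RIP

theorem stmt_3_general {M N : ℕ} (Φ : Matrix (Fin M) (Fin N) ℝ) (K B : ℕ)
    (hB : 0 < B)
    (hpos : 0 < RIC Φ (3 * ((K + 1) / 2))) :
    RIC Φ (K + B) > RIC Φ (3 * ((K + 1) / 2)) / 3 := by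
  have h2m : 2 * ((K + 1) / 2) ≤ K + B := by omega
  linarith [RIC_three_mul_le Φ ((K + 1) / 2), RIC_mono (Φ := Φ) h2m]

theorem stmt_3 {M N : ℕ} (Φ : Matrix (Fin M) (Fin N) ℝ) (K B : ℕ)
    (hK : 0 < K) (hB : 0 < B)
    (hN1 : 3 * ((K + 1) / 2) ≤ N) (hN2 : K + B ≤ N)
    (hpos : 0 < RIC Φ (3 * ((K + 1) / 2))) :
    RIC Φ (K + B) > RIC Φ (3 * ((K + 1) / 2)) / 3 :=
  stmt_3_general Φ K B hB hpos
end

section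
/- Let Φ ∈ ℝ^{M×N} with columns φ_j, let x ∈ ℝ^N have support T with |T| = K, and set y = Φx. Let T^b ⊆ {1,…,N} with n_c = |T^b ∩ T| and n_f = |T^b \ T|, and let x̂ ∈ ℝ^{|T^b|} minimize ‖y − Φ_{T^b} z‖₂, with residue r^b = y − Φ_{T^b} x̂, so that r^b = Φ_{T∪T^b} w for the vector w ∈ ℝ^{|T∪T^b|} obtained by restricting x − x̂ₑ to T∪T^b, where x̂ₑ ∈ ℝ^N agrees with x̂ on T^b and is zero elsewhere. Let B be a positive integer. Then max over J ⊆ {1,…,N} with |J| = B of ‖Φ_J^T r^b‖₂ is at least c (1 − δ_{K+n_f}) ‖w‖₂, where c = min(√(B/(K−n_c)), 1) and δ_{K+n_f} is the restricted isometry constant of Φ of order K+n_f. -/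
open scoped BigOperators
open Matrix

/-! The least-squares residue `r = Φ v`, where `v = x - x̂ₑ` is supported on `T ∪ Tᵇ` and hence
`(K + n_f)`-sparse, is orthogonal to the columns indexed by `Tᵇ`. So `‖r‖² = ⟨v, Φᵀ r⟩` only
involves the `K - n_c` coordinates in `T \ Tᵇ`, and Cauchy–Schwarz together with the lower RIP
bound `(1 - δ) ‖v‖² ≤ ‖r‖²` gives `(1 - δ) ‖v‖ ≤ ‖(Φᵀ r)|_{T \ Tᵇ}‖`. Finally, the `B` largest
entries of a vector supported on `K - n_c` indices carry at least the fraction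
`min (B / (K - n_c)) 1` of its squared norm. -/

open Finset

section EuclideanNorm

variable {ι : Type*} [Fintype ι]

lemma enorm_le_enorm_iff (u v : ι → ℝ) :
    _root_.enorm u ≤ _root_.enorm v ↔ ∑ i, u i ^ 2 ≤ ∑ i, v i ^ 2 :=
  Real.sqrt_le_sqrt_iff (sum_nonneg fun _ _ => sq_nonneg _)

lemma sum_coe_sort_of_eq_zero {I : Finset ι} {f : ι → ℝ} (hf : ∀ j ∉ I, f j = 0) :
    ∑ j : I, f j = ∑ j, f j :=
  (sum_coe_sort I f).trans <| Fintype.sum_subset fun j hj => by_contra fun hjI => hj (hf j hjI)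

lemma enorm_subtype_of_eq_zero {I : Finset ι} {v : ι → ℝ} (hv : ∀ j ∉ I, v j = 0) :
    _root_.enorm (fun j : I => v j) = _root_.enorm v := by
  unfold _root_.enorm
  rw [sum_coe_sort_of_eq_zero (f := fun j => v j ^ 2) fun j hj => by simp [hv j hj]]

end EuclideanNorm

lemma transpose_mulVec_sub_eq_zero_of_forall_enorm_le {m ι : Type*} [Fintype m] [Fintype ι]
    [DecidableEq ι]
    (A : Matrix m ι ℝ) (y : m → ℝ) (z₀ : ι → ℝ)
    (hmin : ∀ z, _root_.enorm (y - A *ᵥ z₀) ≤ _root_.enorm (y - A *ᵥ z)) :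
    Aᵀ *ᵥ (y - A *ᵥ z₀) = 0 := by
  funext c
  set r := y - A *ᵥ z₀
  set d := ∑ i, A i c * r i
  set q := ∑ i, A i c ^ 2
  have hperturb (t : ℝ) : 2 * t * d ≤ t ^ 2 * q := by
    have h := (enorm_le_enorm_iff _ _).1 (hmin (z₀ + t • Pi.single c 1))
    have hres : y - A *ᵥ (z₀ + t • Pi.single c 1) = fun i => r i - t * A i c := by
      ext i
      simp only [mulVec_add, mulVec_smul, mulVec_single, MulOpposite.op_one, one_smul,
        Pi.sub_apply, Pi.add_apply, Pi.smul_apply, col_apply, smul_eq_mul, r]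
      ring
    have hexpand : ∑ i, (r i - t * A i c) ^ 2 = ∑ i, r i ^ 2 - 2 * t * d + t ^ 2 * q := by
      have hterm (i : m) :
          (r i - t * A i c) ^ 2 = r i ^ 2 - 2 * t * (A i c * r i) + t ^ 2 * A i c ^ 2 := by
        ring
      simp only [hterm, sum_add_distrib, sum_sub_distrib, ← mul_sum, d, q]
    rw [hres, hexpand] at h
    linarith
  have hq : 0 ≤ q := sum_nonneg fun i _ => sq_nonneg _
  -- testing with `t = d / (q + 1)` gives `d ^ 2 * (q + 2) ≤ 0`
  have h := hperturb (d / (q + 1))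
  have hd : d ^ 2 * (q + 2) ≤ 0 := by
    field_simp at h
    nlinarith
  have : d = 0 := by nlinarith [sq_nonneg d]
  simpa [mulVec, dotProduct] using this

lemma exists_subset_card_eq_mul_sum_le {α : Type*} [DecidableEq α] (U : Finset α) (f : α → ℝ)
    {B : ℕ} (hBU : B ≤ #U) :
    ∃ J ⊆ U, #J = B ∧ (B : ℝ) * ∑ j ∈ U, f j ≤ #U * ∑ j ∈ J, f j := by
  obtain ⟨J, hJmem, hJmax⟩ := exists_max_image (U.powersetCard B) (fun J => ∑ j ∈ J, f j)
    (powersetCard_nonempty.2 hBU)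
  obtain ⟨hJU, hJB⟩ := mem_powersetCard.1 hJmem
  refine ⟨J, hJU, hJB, ?_⟩
  -- otherwise swapping `i` in for `j` would increase the sum over `J`
  have hexch : ∀ i ∈ U \ J, ∀ j ∈ J, f i ≤ f j := by
    intro i hi j hj
    obtain ⟨hiU, hiJ⟩ := mem_sdiff.1 hi
    have hiJ' : i ∉ J.erase j := fun h => hiJ (mem_of_mem_erase h)
    have hswap := hJmax (insert i (J.erase j)) <| mem_powersetCard.2
      ⟨insert_subset hiU ((erase_subset j J).trans hJU),
        by rw [card_insert_of_notMem hiJ', card_erase_add_one hj, hJB]⟩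
    rw [sum_insert hiJ', sum_erase_eq_sub hj] at hswap
    linarith
  have hdouble : ∑ i ∈ U \ J, ∑ _j ∈ J, f i ≤ ∑ _i ∈ U \ J, ∑ j ∈ J, f j :=
    sum_le_sum fun i hi => sum_le_sum fun j hj => hexch i hi j hj
  simp only [sum_const, hJB, card_sdiff_of_subset hJU, nsmul_eq_mul, ← mul_sum] at hdouble
  rw [Nat.cast_sub hBU] at hdouble
  rw [← sum_sdiff hJU]
  linarith

lemma exists_card_eq_min_sqrt_mul_sqrt_sum_le {α : Type*} [Fintype α] [DecidableEq α]
    (U : Finset α) {f : α → ℝ} (hf : ∀ j, 0 ≤ f j) {B : ℕ} (hB : B ≤ Fintype.card α) :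
    ∃ J : Finset α, #J = B ∧
      min (√((B : ℝ) / #U)) 1 * √(∑ j ∈ U, f j) ≤ √(∑ j ∈ J, f j) := by
  have hU : 0 ≤ ∑ j ∈ U, f j := sum_nonneg fun j _ => hf j
  suffices ∃ J : Finset α, #J = B ∧ min ((B : ℝ) / #U) 1 * ∑ j ∈ U, f j ≤ ∑ j ∈ J, f j by
    obtain ⟨J, hJ, hsum⟩ := this
    refine ⟨J, hJ, ?_⟩
    rw [← Real.sqrt_one, ← Real.sqrt_monotone.map_min, ← Real.sqrt_mul (by positivity)]
    exact Real.sqrt_le_sqrt hsum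
  rcases le_total B #U with hBU | hUB
  · obtain ⟨J, -, hJ, hsum⟩ := exists_subset_card_eq_mul_sum_le U f hBU
    refine ⟨J, hJ, (mul_le_mul_of_nonneg_right (min_le_left _ _) hU).trans ?_⟩
    rcases (#U).eq_zero_or_pos with h0 | hpos
    · simpa [h0] using sum_nonneg fun j _ => hf j
    · rw [div_mul_eq_mul_div, div_le_iff₀ (by exact_mod_cast hpos)]
      linarith
  · obtain ⟨J, hUJ, -, hJ⟩ := exists_subsuperset_card_eq (subset_univ U) hUB (by simpa using hB)
    refine ⟨J, hJ, (mul_le_mul_of_nonneg_right (min_le_right _ _) hU).trans ?_⟩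
    rw [one_mul]
    exact sum_le_sum_of_subset_of_nonneg hUJ fun j _ _ => hf j

section MatrixEstimates

variable {m n : Type*} [Fintype m] [Fintype n]

lemma sum_sq_mulVec_le (A : Matrix m n ℝ) (v : n → ℝ) :
    ∑ i, (A *ᵥ v) i ^ 2 ≤ (∑ i, ∑ j, A i j ^ 2) * ∑ j, v j ^ 2 := by
  rw [sum_mul]
  exact sum_le_sum fun i _ => sum_mul_sq_le_sq_mul_sq univ (A i) v

/-- `‖Φ v‖² = ⟨v, Φᵀ Φ v⟩` only sees `S \ Z`, so Cauchy–Schwarz on `S \ Z` applies. -/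
lemma sq_sum_sq_mulVec_le [DecidableEq n] (Φ : Matrix m n ℝ) {v : n → ℝ} {S Z : Finset n}
    (hv : ∀ j ∉ S ∪ Z, v j = 0) (hg : ∀ j ∈ Z, (Φᵀ *ᵥ (Φ *ᵥ v)) j = 0) :
    (∑ i, (Φ *ᵥ v) i ^ 2) ^ 2 ≤ (∑ j, v j ^ 2) * ∑ j ∈ S \ Z, (Φᵀ *ᵥ (Φ *ᵥ v)) j ^ 2 := by
  set g := Φᵀ *ᵥ (Φ *ᵥ v)
  have hvg (j : n) (hj : j ∉ S \ Z) : v j * g j = 0 := by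
    by_cases hjZ : j ∈ Z
    · rw [hg j hjZ, mul_zero]
    · rw [hv j fun h => hj (mem_sdiff.2 ⟨(mem_union.1 h).resolve_right hjZ, hjZ⟩), zero_mul]
  have hinner : ∑ i, (Φ *ᵥ v) i ^ 2 = ∑ j ∈ S \ Z, v j * g j := by
    calc ∑ i, (Φ *ᵥ v) i ^ 2 = v ⬝ᵥ g := by
          rw [dotProduct_mulVec, vecMul_transpose]
          simp only [dotProduct, sq]
      _ = ∑ j ∈ S \ Z, v j * g j :=
          (Fintype.sum_subset fun j hj => by_contra fun hjU => hj (hvg j hjU)).symm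
  rw [hinner]
  calc (∑ j ∈ S \ Z, v j * g j) ^ 2 ≤ (∑ j ∈ S \ Z, v j ^ 2) * ∑ j ∈ S \ Z, g j ^ 2 :=
        sum_mul_sq_le_sq_mul_sq _ v g
    _ ≤ (∑ j, v j ^ 2) * ∑ j ∈ S \ Z, g j ^ 2 :=
        mul_le_mul_of_nonneg_right (sum_le_univ_sum_of_nonneg fun _ => sq_nonneg _)
          (sum_nonneg fun _ _ => sq_nonneg _)

end MatrixEstimates

section RestrictedIsometry

variable {M N : ℕ} (Φ : Matrix (Fin M) (Fin N) ℝ)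

lemma one_sub_RIC_mul_le {L : ℕ} {x : Fin N → ℝ} (hx : SparseLe L x) :
    (1 - RIC Φ L) * ∑ j, x j ^ 2 ≤ ∑ i, (Φ *ᵥ x) i ^ 2 := by
  set a := ∑ j, x j ^ 2
  set b := ∑ i, (Φ *ᵥ x) i ^ 2
  have hb : 0 ≤ b := sum_nonneg fun _ _ => sq_nonneg _
  have ha : 0 ≤ a := sum_nonneg fun _ _ => sq_nonneg _
  rcases ha.eq_or_lt with ha | ha
  · rw [← ha, mul_zero]
    exact hb
  -- `1 - b / a` is a lower bound for every admissible constant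
  suffices 1 - b / a ≤ RIC Φ L by
    rw [← le_div_iff₀ ha]
    linarith
  set C := ∑ i, ∑ j, Φ i j ^ 2
  have hC : 0 ≤ C := by positivity
  refine le_csInf ⟨1 + C, by positivity, fun z _ => ⟨?_, ?_⟩⟩ ?_
  · nlinarith [sum_nonneg fun j (_ : j ∈ univ) => sq_nonneg (z j),
      sum_nonneg fun i (_ : i ∈ univ) => sq_nonneg ((Φ *ᵥ z) i)]
  · nlinarith [sum_sq_mulVec_le Φ z, sum_nonneg fun j (_ : j ∈ univ) => sq_nonneg (z j)]
  · rintro δ ⟨-, hδ⟩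
    rw [sub_le_comm, le_div_iff₀ ha]
    linarith [(hδ x hx).1]

lemma one_sub_RIC_mul_sqrt_le {L : ℕ} {v : Fin N → ℝ} (hL : SparseLe L v)
    {S Z : Finset (Fin N)} (hv : ∀ j ∉ S ∪ Z, v j = 0) (hg : ∀ j ∈ Z, (Φᵀ *ᵥ (Φ *ᵥ v)) j = 0) :
    (1 - RIC Φ L) * √(∑ j, v j ^ 2) ≤ √(∑ j ∈ S \ Z, (Φᵀ *ᵥ (Φ *ᵥ v)) j ^ 2) := by
  set s := √(∑ j, v j ^ 2)
  set a := 1 - RIC Φ L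
  have hs2 : s ^ 2 = ∑ j, v j ^ 2 := Real.sq_sqrt (sum_nonneg fun _ _ => sq_nonneg _)
  have hlow := one_sub_RIC_mul_le Φ hL
  have hcs := sq_sum_sq_mulVec_le Φ hv hg
  rw [← hs2] at hlow hcs
  rcases le_or_gt (a * s) 0 with hneg | hpos
  · exact hneg.trans (Real.sqrt_nonneg _)
  have ha : 0 < a := pos_of_mul_pos_left hpos (Real.sqrt_nonneg _)
  have hs : 0 < s := pos_of_mul_pos_right hpos ha.le
  apply Real.le_sqrt_of_sq_le
  have hsq : (a * s ^ 2) ^ 2 ≤ (∑ i, (Φ *ᵥ v) i ^ 2) ^ 2 :=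
    pow_le_pow_left₀ (by positivity) hlow 2
  nlinarith [pow_pos hs 2]

lemma sparseLe_of_eq_zero {L : ℕ} {v : Fin N → ℝ} {S : Finset (Fin N)} (hv : ∀ j ∉ S, v j = 0)
    (hS : #S ≤ L) : SparseLe L v := by
  unfold SparseLe
  refine (card_le_card fun j hj => ?_).trans hS
  by_contra hjS
  exact (mem_filter.1 hj).2 (hv j hjS)

end RestrictedIsometry

section ColumnSubmatrix

variable {M N : ℕ} (Φ : Matrix (Fin M) (Fin N) ℝ)

lemma colSub_mulVec_of_eq_zero {I : Finset (Fin N)} {v : Fin N → ℝ} (hv : ∀ j ∉ I, v j = 0) :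
    colSub Φ I *ᵥ (fun j : I => v j) = Φ *ᵥ v := by
  ext i
  exact sum_coe_sort_of_eq_zero (f := fun j => Φ i j * v j) fun j hj => by rw [hv j hj, mul_zero]

lemma colSub_mulVec_eq_mulVec_of_extend {I : Finset (Fin N)} {u : I → ℝ} {uE : Fin N → ℝ}
    (huE : ∀ j, uE j = if h : j ∈ I then u ⟨j, h⟩ else 0) : colSub Φ I *ᵥ u = Φ *ᵥ uE := by
  have hu : u = fun j : I => uE j := funext fun j => by rw [huE, dif_pos j.2]
  rw [hu, colSub_mulVec_of_eq_zero Φ fun j hj => by rw [huE, dif_neg hj]]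

lemma enorm_colSub_transpose_mulVec (J : Finset (Fin N)) (r : Fin M → ℝ) :
    _root_.enorm ((colSub Φ J)ᵀ *ᵥ r) = √(∑ j ∈ J, (Φᵀ *ᵥ r) j ^ 2) :=
  congrArg Real.sqrt (sum_coe_sort J fun j => (Φᵀ *ᵥ r) j ^ 2)

end ColumnSubmatrix

theorem stmt_11_general {M N : ℕ} (Φ : Matrix (Fin M) (Fin N) ℝ)
    (x : Fin N → ℝ) (T : Finset (Fin N)) (hT : ∀ j, j ∈ T ↔ x j ≠ 0)
    (K : ℕ) (hK : T.card = K)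
    (y : Fin M → ℝ) (hy : y = Φ.mulVec x)
    (Tb : Finset (Fin N)) (n_c n_f : ℕ)
    (hnc : (Tb ∩ T).card = n_c) (hnf : (Tb \ T).card = n_f)
    (xhat : {j // j ∈ Tb} → ℝ)
    (hxhat : ∀ z : {j // j ∈ Tb} → ℝ,
      _root_.enorm (y - (colSub Φ Tb).mulVec xhat) ≤ _root_.enorm (y - (colSub Φ Tb).mulVec z))
    (rb : Fin M → ℝ) (hrb : rb = y - (colSub Φ Tb).mulVec xhat)
    (xhatE : Fin N → ℝ)
    (hxhatE : ∀ j : Fin N, xhatE j = if h : j ∈ Tb then xhat ⟨j, h⟩ else 0)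
    (w : {j // j ∈ T ∪ Tb} → ℝ) (hw : ∀ j, w j = x j.val - xhatE j.val)
    (B : ℕ) (hBN : B ≤ N) :
    rb = (colSub Φ (T ∪ Tb)).mulVec w ∧
      ∃ J : Finset (Fin N), J.card = B ∧
        min (Real.sqrt ((B : ℝ) / ((K : ℝ) - n_c))) 1 * ((1 - RIC Φ (K + n_f)) * _root_.enorm w)
          ≤ _root_.enorm ((colSub Φ J)ᵀ.mulVec rb) := by
  classical
  set v : Fin N → ℝ := x - xhatE
  have hv : ∀ j ∉ T ∪ Tb, v j = 0 := by
    intro j hj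
    rw [mem_union, not_or] at hj
    simp [v, hxhatE, hj.2, not_not.1 (mt (hT j).2 hj.1)]
  have hrbv : rb = Φ *ᵥ v := by
    rw [hrb, hy, colSub_mulVec_eq_mulVec_of_extend Φ hxhatE, ← mulVec_sub]
  have hwv : w = fun j : ↥(T ∪ Tb) => v j := funext hw
  refine ⟨by rw [hrbv, hwv, colSub_mulVec_of_eq_zero Φ hv], ?_⟩
  have horth : ∀ j ∈ Tb, (Φᵀ *ᵥ (Φ *ᵥ v)) j = 0 := fun j hj => by
    rw [← hrbv, hrb]
    exact congrFun (transpose_mulVec_sub_eq_zero_of_forall_enorm_le _ y xhat hxhat) ⟨j, hj⟩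
  have hsparse : SparseLe (K + n_f) v := sparseLe_of_eq_zero hv <| by
    rw [union_comm, ← card_sdiff_add_card, hnf, hK, add_comm]
  have hcard : (#(T \ Tb) : ℝ) = K - n_c := by
    rw [← hK, ← hnc, inter_comm, ← card_sdiff_add_card_inter T Tb]
    push_cast
    ring
  obtain ⟨J, hJ, hsum⟩ := exists_card_eq_min_sqrt_mul_sqrt_sum_le (T \ Tb)
    (f := fun j => (Φᵀ *ᵥ rb) j ^ 2) (fun _ => sq_nonneg _) (by simpa using hBN)
  refine ⟨J, hJ, ?_⟩
  rw [enorm_colSub_transpose_mulVec, hwv, enorm_subtype_of_eq_zero hv, ← hcard]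
  refine le_trans (mul_le_mul_of_nonneg_left ?_ (le_min (Real.sqrt_nonneg _) zero_le_one)) hsum
  rw [hrbv]
  exact one_sub_RIC_mul_sqrt_le Φ hsparse hv horth

theorem stmt_11 {M N : ℕ} (Φ : Matrix (Fin M) (Fin N) ℝ)
    (x : Fin N → ℝ) (T : Finset (Fin N)) (hT : ∀ j, j ∈ T ↔ x j ≠ 0)
    (K : ℕ) (hK : T.card = K)
    (y : Fin M → ℝ) (hy : y = Φ.mulVec x)
    (Tb : Finset (Fin N)) (n_c n_f : ℕ)
    (hnc : (Tb ∩ T).card = n_c) (hnf : (Tb \ T).card = n_f)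
    (xhat : {j // j ∈ Tb} → ℝ)
    (hxhat : ∀ z : {j // j ∈ Tb} → ℝ,
      _root_.enorm (y - (colSub Φ Tb).mulVec xhat) ≤ _root_.enorm (y - (colSub Φ Tb).mulVec z))
    (rb : Fin M → ℝ) (hrb : rb = y - (colSub Φ Tb).mulVec xhat)
    (xhatE : Fin N → ℝ)
    (hxhatE : ∀ j : Fin N, xhatE j = if h : j ∈ Tb then xhat ⟨j, h⟩ else 0)
    (w : {j // j ∈ T ∪ Tb} → ℝ) (hw : ∀ j, w j = x j.val - xhatE j.val)
    (B : ℕ) (hB : 0 < B) (hBN : B ≤ N) :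
    rb = (colSub Φ (T ∪ Tb)).mulVec w ∧
      ∃ J : Finset (Fin N), J.card = B ∧
        min (Real.sqrt ((B : ℝ) / ((K : ℝ) - n_c))) 1 * ((1 - RIC Φ (K + n_f)) * _root_.enorm w)
          ≤ _root_.enorm ((colSub Φ J)ᵀ.mulVec rb) :=
  stmt_11_general Φ x T hT K hK y hy Tb n_c n_f hnc hnf xhat hxhat rb hrb xhatE hxhatE w hw B hBN
end

section
/- Let Φ ∈ ℝ^{M×N} be full spark, i.e., every set of at most M columns of Φ is linearly independent. Let x ∈ ℝ^N have support T with |T| = K and 2K ≤ M, and set y = Φx. Let S ⊆ {1,…,N} be a nonempty index set with |S| ≤ K, and let ẑ minimize ‖y − Φ_S z‖₂ over z ∈ ℝ^{|S|}. Then the residue y − Φ_S ẑ is zero if and only if T ⊆ S (equivalently, since |S| ≤ K = |T|, if and only if S = T). -/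
open scoped BigOperators
open Matrix

/-- `Φ` is full spark: every set of at most `M` columns is linearly independent. -/
def FullSpark {M N : ℕ} (Φ : Matrix (Fin M) (Fin N) ℝ) : Prop :=
  ∀ S : Finset (Fin N), S.card ≤ M →
    LinearIndependent ℝ (fun j : {j // j ∈ S} => fun i => Φ i j.val)

/-! If the residue vanishes, then `x` and the zero-extension of `ẑ` have the same image under `Φ`
and are both supported on `T ∪ S`, a set of at most `2K ≤ M` columns; full spark makes `Φ`
injective on such vectors, so `x` is supported on `S`. Conversely, if `T ⊆ S` the restriction of
`x` to `S` fits `y` exactly, so the minimal residue is zero. -/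

theorem enorm_eq_norm {ι : Type*} [Fintype ι] (v : ι → ℝ) :
    _root_.enorm v = ‖WithLp.toLp 2 v‖ := by
  simp [_root_.enorm, EuclideanSpace.norm_eq]

theorem enorm_eq_zero_iff {ι : Type*} [Fintype ι] {v : ι → ℝ} : _root_.enorm v = 0 ↔ v = 0 := by
  simp [enorm_eq_norm]

theorem enorm_nonneg {ι : Type*} [Fintype ι] (v : ι → ℝ) : 0 ≤ _root_.enorm v :=
  Real.sqrt_nonneg _

theorem extend_val_apply_of_notMem {α β : Type*} [Zero β] {S : Finset α} (z : {j // j ∈ S} → β)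
    {j : α} (hj : j ∉ S) : Function.extend Subtype.val z 0 j = 0 :=
  Function.extend_apply' _ _ _ (by simpa using hj)

section colSub

variable {M N : ℕ} (Φ : Matrix (Fin M) (Fin N) ℝ)

theorem colSub_mulVec (S : Finset (Fin N)) (z : {j // j ∈ S} → ℝ) :
    colSub Φ S *ᵥ z = Φ *ᵥ Function.extend Subtype.val z 0 := by
  set e := Function.extend (Subtype.val : {j // j ∈ S} → Fin N) z 0
  funext i
  calc (colSub Φ S *ᵥ z) i = ∑ j : {j // j ∈ S}, Φ i j * e j := by
        simp only [mulVec, dotProduct, colSub, of_apply, e, Subtype.val_injective.extend_apply]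
    _ = ∑ j ∈ S, Φ i j * e j := (Finset.sum_subtype S (fun _ => Iff.rfl) fun j => Φ i j * e j).symm
    _ = (Φ *ᵥ e) i := Finset.sum_subset (Finset.subset_univ S) fun j _ hj => by
        rw [show e j = 0 from extend_val_apply_of_notMem z hj, mul_zero]

theorem extend_val_restrict_eq_self {S : Finset (Fin N)} {w : Fin N → ℝ} (hw : ∀ j ∉ S, w j = 0) :
    Function.extend (Subtype.val : {j // j ∈ S} → Fin N) (fun j => w j) 0 = w := by
  funext j
  by_cases hj : j ∈ S
  · exact Subtype.val_injective.extend_apply _ _ ⟨j, hj⟩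
  · rw [extend_val_apply_of_notMem _ hj, hw j hj]

theorem colSub_mulVec_restrict {S : Finset (Fin N)} {w : Fin N → ℝ} (hw : ∀ j ∉ S, w j = 0) :
    colSub Φ S *ᵥ (fun j => w j) = Φ *ᵥ w := by
  rw [colSub_mulVec, extend_val_restrict_eq_self hw]

variable {Φ}

theorem FullSpark.injective_colSub_mulVec (hΦ : FullSpark Φ) {U : Finset (Fin N)}
    (hU : U.card ≤ M) : Function.Injective (colSub Φ U).mulVec :=
  mulVec_injective_iff.2 (hΦ U hU)

theorem FullSpark.eq_of_mulVec_eq (hΦ : FullSpark Φ) {U : Finset (Fin N)} (hU : U.card ≤ M)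
    {v w : Fin N → ℝ} (hv : ∀ j ∉ U, v j = 0) (hw : ∀ j ∉ U, w j = 0) (h : Φ *ᵥ v = Φ *ᵥ w) :
    v = w := by
  have hrestrict : (fun j : {j // j ∈ U} => v j) = fun j : {j // j ∈ U} => w j :=
    hΦ.injective_colSub_mulVec hU <| by
      rw [colSub_mulVec_restrict Φ hv, colSub_mulVec_restrict Φ hw, h]
  rw [← extend_val_restrict_eq_self hv, ← extend_val_restrict_eq_self hw, hrestrict]

end colSub

theorem stmt_12_general {M N : ℕ} (Φ : Matrix (Fin M) (Fin N) ℝ) (hΦ : FullSpark Φ)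
    (x : Fin N → ℝ) (T : Finset (Fin N)) (hT : ∀ j, j ∈ T ↔ x j ≠ 0)
    (K : ℕ) (hK : T.card = K) (h2K : 2 * K ≤ M)
    (y : Fin M → ℝ) (hy : y = Φ.mulVec x)
    (S : Finset (Fin N)) (hSK : S.card ≤ K)
    (zhat : {j // j ∈ S} → ℝ)
    (hzhat : ∀ z : {j // j ∈ S} → ℝ,
      _root_.enorm (y - (colSub Φ S).mulVec zhat) ≤ _root_.enorm (y - (colSub Φ S).mulVec z)) :
    y - (colSub Φ S).mulVec zhat = 0 ↔ T ⊆ S := by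
  have hx_out : ∀ j ∉ T, x j = 0 := fun j hj => not_not.1 (mt (hT j).2 hj)
  constructor
  · intro hres
    have hcard : (T ∪ S).card ≤ M := (Finset.card_union_le T S).trans (by omega)
    have hx : x = Function.extend Subtype.val zhat 0 := by
      refine hΦ.eq_of_mulVec_eq hcard (fun j hj => hx_out j (Finset.notMem_union.1 hj).1)
        (fun j hj => extend_val_apply_of_notMem zhat (Finset.notMem_union.1 hj).2) ?_
      rw [← colSub_mulVec, ← hy, ← sub_eq_zero, hres]
    intro j hjT
    by_contra hjS
    exact (hT j).1 hjT (hx ▸ extend_val_apply_of_notMem zhat hjS)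
  · intro hTS
    have hfit : y - colSub Φ S *ᵥ (fun j => x j) = 0 := by
      rw [colSub_mulVec_restrict Φ fun j hj => hx_out j (mt (@hTS j) hj), hy, sub_self]
    have hle := hzhat fun j => x j
    rw [hfit, enorm_eq_zero_iff.2 rfl] at hle
    exact enorm_eq_zero_iff.1 (le_antisymm hle (enorm_nonneg _))

theorem stmt_12 {M N : ℕ} (Φ : Matrix (Fin M) (Fin N) ℝ) (hΦ : FullSpark Φ)
    (x : Fin N → ℝ) (T : Finset (Fin N)) (hT : ∀ j, j ∈ T ↔ x j ≠ 0)
    (K : ℕ) (hK : T.card = K) (h2K : 2 * K ≤ M)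
    (y : Fin M → ℝ) (hy : y = Φ.mulVec x)
    (S : Finset (Fin N)) (hS : S.Nonempty) (hSK : S.card ≤ K)
    (zhat : {j // j ∈ S} → ℝ)
    (hzhat : ∀ z : {j // j ∈ S} → ℝ,
      _root_.enorm (y - (colSub Φ S).mulVec zhat) ≤ _root_.enorm (y - (colSub Φ S).mulVec z)) :
    y - (colSub Φ S).mulVec zhat = 0 ↔ T ⊆ S :=
  stmt_12_general Φ hΦ x T hT K hK h2K y hy S hSK zhat hzhat
end
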